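/- arXiv:2508.04081 — 3 statements merged into one kernel-verified Lean document; each statement's English description precedes it below -/
import Mathlib

section
/- Tutte's theorem: Let G = (V, E) be a finite simple undirected graph and let T(G) be its Tutte matrix over the multivariate polynomial ring F[X_E] for a field F. Then G has a perfect matching if and only if det T(G) is not the zero polynomial. -/
open scoped Classical

/-- The Tutte matrix of a simple graph `G` on a linearly ordered finite vertex set `V`,
over the multivariate polynomial ring `F[X_E]` (one indeterminate `x_e` for every
potential edge `e`; only the indeterminates of actual edges occur in the matrix):
entry `x_{{u,v}}` if `u ~ v` and `u < v`, entry `-x_{{u,v}}` if `u ~ v` and `u > v`,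
and `0` otherwise. -/
noncomputable def tutteMatrix (V F : Type) [Fintype V] [LinearOrder V] [Field F]
    (G : SimpleGraph V) : Matrix V V (MvPolynomial (Sym2 V) F) :=
  fun u v =>
    if G.Adj u v then
      (if u < v then MvPolynomial.X s(u, v) else - MvPolynomial.X s(u, v))
    else 0

/-!
If `M` is a perfect matching, substituting `x_e = 1` for `e ∈ M` and `x_e = 0` otherwise turns
the Tutte matrix into a signed permutation matrix of the involution `M`, so its determinant
is `±1`. Conversely, expand `det T(G) = ∑ σ, sgn σ • ∏ v, T(σ v, v)`. Reversing the odd cycle of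
`σ` through the least vertex lying on an odd cycle is an involution on the permutations with an
odd cycle; it preserves the sign and, by skew-symmetry, negates the product, so only the
permutations all of whose cycles are even survive. A nonzero surviving term has `σ v ~ v` for
every `v`, and taking every other edge along each (even) cycle of `σ` is a perfect matching.
-/

open Finset

namespace Equiv.Perm

variable {α : Type*} [Fintype α]

section

variable [DecidableEq α] {σ : Perm α} {x : α}

/- `χ x` is the parity of an exponent `n` with `(σ ^ n) (b x) = x`, where `b x` is a fixed base
point of the cycle of `x`; it is well defined because that cycle has even length. -/
theorem exists_zmod_two_coloring (hσ : ∀ x, σ x ≠ x)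
    (heven : ∀ x, Even #(σ.cycleOf x).support) :
    ∃ χ : α → ZMod 2, ∀ x, χ (σ x) = χ x + 1 := by
  let b : α → α := fun x => (Quotient.mk'' x : Quotient (SameCycle.setoid σ)).out
  have hbσ : ∀ x, b (σ x) = b x := fun x =>
    congrArg Quotient.out (Quotient.sound (sameCycle_apply_left.2 (SameCycle.refl σ x)))
  have hb : ∀ x, SameCycle σ (b x) x := fun x => Quotient.mk_out' (s₁ := SameCycle.setoid σ) x
  choose n hn using hb
  refine ⟨fun x => n x, fun x => ?_⟩
  have h : (σ ^ n (σ x)) (b x) = (σ ^ (1 + n x)) (b x) := by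
    rw [zpow_add, zpow_one, mul_apply, hn]
    conv_rhs => rw [← hn (σ x), hbσ]
  have hmod : n (σ x) ≡ 1 + n x [ZMOD #(σ.cycleOf (b x)).support] :=
    (zpow_eq_zpow_on_iff σ (hσ (b x))).1 h
  have h2 := hmod.of_dvd (Int.natCast_dvd_natCast.2 (even_iff_two_dvd.1 (heven (b x))))
  rw [← ZMod.intCast_eq_intCast_iff] at h2
  push_cast at h2
  show (n (σ x) : ZMod 2) = n x + 1
  rw [h2, add_comm]

theorem exists_involutive_of_even_cycles (hσ : ∀ x, σ x ≠ x)
    (heven : ∀ x, Even #(σ.cycleOf x).support) :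
    ∃ m : α → α, Function.Involutive m ∧ ∀ x, m x = σ x ∨ m x = σ⁻¹ x := by
  obtain ⟨χ, hχ⟩ := exists_zmod_two_coloring hσ heven
  have hz : ∀ a : ZMod 2, a + 1 ≠ 0 ↔ a = 0 := by decide
  refine ⟨fun x => if χ x = 0 then σ x else σ⁻¹ x, fun x => ?_,
    fun x => by dsimp only; split_ifs <;> simp⟩
  by_cases hx : χ x = 0
  · have hσx : χ (σ x) ≠ 0 := by rw [hχ, hz]; exact hx
    dsimp only
    rw [if_pos hx, if_neg hσx]
    simp
  · have hσx : χ (σ⁻¹ x) = 0 := by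
      rw [← hz, ← hχ, show σ (σ⁻¹ x) = x by simp]
      exact hx
    dsimp only
    rw [if_neg hx, if_pos hσx]
    simp

def reverseCycleOf (σ : Perm α) (x : α) : Perm α :=
  σ * (σ.cycleOf x)⁻¹ * (σ.cycleOf x)⁻¹

theorem reverseCycleOf_apply_of_notMem {y : α} (hy : y ∉ (σ.cycleOf x).support) :
    σ.reverseCycleOf x y = σ y := by
  have : (σ.cycleOf x)⁻¹ y = y := by rwa [← notMem_support, support_inv]
  simp only [reverseCycleOf, coe_mul, Function.comp_apply, this]

theorem reverseCycleOf_apply_of_mem {y : α} (hy : y ∈ (σ.cycleOf x).support) :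
    σ.reverseCycleOf x y = (σ.cycleOf x)⁻¹ y := by
  set c := σ.cycleOf x
  have hz : c⁻¹ (c⁻¹ y) ∈ c.support := by
    rwa [← support_inv, apply_mem_support, apply_mem_support, support_inv]
  have hσz : σ (c⁻¹ (c⁻¹ y)) = c (c⁻¹ (c⁻¹ y)) :=
    ((mem_support_cycleOf_iff.1 hz).1.cycleOf_apply).symm
  simp only [reverseCycleOf, coe_mul, Function.comp_apply]
  rw [hσz]
  simp

theorem sign_reverseCycleOf : sign (σ.reverseCycleOf x) = sign σ := by
  simp [reverseCycleOf, mul_assoc, Int.units_mul_self]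

theorem disjoint_cycleOf_mul_inv (hx : σ x ≠ x) :
    Disjoint (σ.cycleOf x) (σ * (σ.cycleOf x)⁻¹) :=
  (disjoint_mul_inv_of_mem_cycleFactorsFinset
    (cycleOf_mem_cycleFactorsFinset_iff.2 (mem_support.2 hx))).symm

theorem commute_cycleOf_self (hx : σ x ≠ x) : Commute (σ.cycleOf x) σ :=
  self_mem_cycle_factors_commute (cycleOf_mem_cycleFactorsFinset_iff.2 (mem_support.2 hx))

theorem cycleOf_mul_mul_inv (hx : σ x ≠ x) : σ.cycleOf x * (σ * (σ.cycleOf x)⁻¹) = σ := by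
  rw [← mul_assoc, (commute_cycleOf_self hx).eq, mul_inv_cancel_right]

theorem reverseCycleOf_eq_inv_mul (hx : σ x ≠ x) :
    σ.reverseCycleOf x = (σ.cycleOf x)⁻¹ * (σ * (σ.cycleOf x)⁻¹) := by
  rw [reverseCycleOf, ← mul_assoc, (commute_cycleOf_self hx).inv_left.eq]

theorem card_support_cycleOf_reverseCycleOf (hx : σ x ≠ x) (y : α) :
    #((σ.reverseCycleOf x).cycleOf y).support = #(σ.cycleOf y).support := by
  have hd := disjoint_cycleOf_mul_inv hx
  have hdy := hd.mono (support_cycleOf_le _ y) (support_cycleOf_le _ y)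
  rw [reverseCycleOf_eq_inv_mul hx, hd.inv_left.cycleOf_mul_distrib, ← cycleOf_inv,
    hdy.inv_left.card_support_mul, support_inv, ← hdy.card_support_mul,
    ← hd.cycleOf_mul_distrib, cycleOf_mul_mul_inv hx]

theorem cycleOf_reverseCycleOf_self (hx : σ x ≠ x) :
    (σ.reverseCycleOf x).cycleOf x = (σ.cycleOf x)⁻¹ := by
  have hd := disjoint_cycleOf_mul_inv hx
  have hcx : σ.cycleOf x x ≠ x := by rwa [cycleOf_apply_self]
  have hρx : (σ * (σ.cycleOf x)⁻¹) x = x := (hd x).resolve_left hcx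
  rw [reverseCycleOf_eq_inv_mul hx, hd.inv_left.cycleOf_mul_distrib, ← cycleOf_inv,
    (isCycle_cycleOf σ hx).cycleOf_eq hcx, (cycleOf_eq_one_iff _).2 hρx, mul_one]

theorem reverseCycleOf_reverseCycleOf (hx : σ x ≠ x) :
    (σ.reverseCycleOf x).reverseCycleOf x = σ := by
  show σ.reverseCycleOf x * ((σ.reverseCycleOf x).cycleOf x)⁻¹ *
    ((σ.reverseCycleOf x).cycleOf x)⁻¹ = σ
  rw [cycleOf_reverseCycleOf_self hx, inv_inv, reverseCycleOf]
  group

theorem reverseCycleOf_ne_self (hodd : Odd #(σ.cycleOf x).support) :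
    σ.reverseCycleOf x ≠ σ := by
  have hx : σ x ≠ x := support_cycleOf_nonempty.1 (card_pos.1 hodd.pos)
  have hc := isCycle_cycleOf σ hx
  intro h
  have hsq : (σ.cycleOf x) ^ 2 = 1 := by
    rw [reverseCycleOf, mul_assoc, mul_eq_left, ← mul_inv_rev, inv_eq_one] at h
    rw [sq, h]
  have hle := Nat.le_of_dvd two_pos (hc.orderOf ▸ orderOf_dvd_of_pow_eq_one hsq)
  have := hc.two_le_card_support
  rw [show #(σ.cycleOf x).support = 2 by omega] at hodd
  exact Nat.not_odd_iff_even.2 even_two hodd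

def oddCycleSupport (σ : Perm α) : Finset α := {x | Odd #(σ.cycleOf x).support}

theorem apply_ne_self_of_mem_oddCycleSupport (hx : x ∈ σ.oddCycleSupport) : σ x ≠ x :=
  support_cycleOf_nonempty.1 (card_pos.1 (mem_filter.1 hx).2.pos)

theorem oddCycleSupport_reverseCycleOf (hx : σ x ≠ x) :
    (σ.reverseCycleOf x).oddCycleSupport = σ.oddCycleSupport := by
  ext y
  simp only [oddCycleSupport, mem_filter, card_support_cycleOf_reverseCycleOf hx]

end

section

variable [LinearOrder α] {σ : Perm α}

def reverseMinOddCycle (σ : Perm α) : Perm α :=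
  if h : σ.oddCycleSupport.Nonempty then σ.reverseCycleOf (σ.oddCycleSupport.min' h) else σ

theorem reverseMinOddCycle_eq_reverseCycleOf (h : σ.oddCycleSupport.Nonempty) :
    σ.reverseMinOddCycle = σ.reverseCycleOf (σ.oddCycleSupport.min' h) := dif_pos h

theorem reverseMinOddCycle_eq_self (h : ¬σ.oddCycleSupport.Nonempty) :
    σ.reverseMinOddCycle = σ := dif_neg h

theorem oddCycleSupport_reverseMinOddCycle :
    σ.reverseMinOddCycle.oddCycleSupport = σ.oddCycleSupport := by
  by_cases h : σ.oddCycleSupport.Nonempty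
  · rw [reverseMinOddCycle_eq_reverseCycleOf h]
    exact oddCycleSupport_reverseCycleOf (apply_ne_self_of_mem_oddCycleSupport (min'_mem _ h))
  · rw [reverseMinOddCycle_eq_self h]

theorem reverseMinOddCycle_involutive : Function.Involutive (reverseMinOddCycle (α := α)) := by
  intro σ
  by_cases h : σ.oddCycleSupport.Nonempty
  · have hx := apply_ne_self_of_mem_oddCycleSupport (min'_mem _ h)
    have hs := oddCycleSupport_reverseCycleOf hx
    have hτ : (σ.reverseCycleOf (σ.oddCycleSupport.min' h)).oddCycleSupport.Nonempty := by
      rwa [hs]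
    have hmin : (σ.reverseCycleOf _).oddCycleSupport.min' hτ = σ.oddCycleSupport.min' h := by
      congr 1
    rw [reverseMinOddCycle_eq_reverseCycleOf h, reverseMinOddCycle_eq_reverseCycleOf hτ, hmin,
      reverseCycleOf_reverseCycleOf hx]
  · rw [reverseMinOddCycle_eq_self h, reverseMinOddCycle_eq_self h]

end

end Equiv.Perm

namespace Matrix

open Equiv Equiv.Perm

variable {n R : Type*} [Fintype n] [CommRing R]

theorem det_eq_sign_smul_prod_of_apply_eq_zero [DecidableEq n] {A : Matrix n n R} (σ : Perm n)
    (hA : ∀ i j, i ≠ σ j → A i j = 0) : A.det = sign σ • ∏ j, A (σ j) j := by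
  rw [det_apply]
  refine sum_eq_single σ (fun τ _ hτ => ?_) (by simp)
  obtain ⟨j, hj⟩ : ∃ j, τ j ≠ σ j := by
    by_contra! h
    exact hτ (Equiv.ext h)
  rw [prod_eq_zero (f := fun i => A (τ i) i) (mem_univ j) (hA _ _ hj), smul_zero]

theorem prod_reverseCycleOf_of_transpose_eq_neg [DecidableEq n] {A : Matrix n n R}
    (hA : Aᵀ = -A) (σ : Perm n) (x : n) :
    ∏ i, A (σ.reverseCycleOf x i) i = (-1) ^ #(σ.cycleOf x).support * ∏ i, A (σ i) i := by
  set c := σ.cycleOf x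
  have hskew : ∀ i j, A i j = -A j i := fun i j => by
    simpa using congr_fun₂ hA j i
  have hin : ∏ i ∈ c.support, A (σ.reverseCycleOf x i) i =
      (-1) ^ #c.support * ∏ i ∈ c.support, A (σ i) i := calc
    _ = ∏ i ∈ c.support, A (c⁻¹ i) i :=
      prod_congr rfl fun i hi => by rw [reverseCycleOf_apply_of_mem hi]
    _ = ∏ i ∈ c.support, A i (c i) := by
      have hsupp : {i | c⁻¹ i ≠ i} ⊆ c.support := fun i hi => by
        rw [← support_inv]
        exact mem_coe.2 (mem_support.2 hi)
      rw [prod_comp' c⁻¹ _ A hsupp]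
      rfl
    _ = ∏ i ∈ c.support, -A (σ i) i :=
      prod_congr rfl fun i hi => by
        rw [(mem_support_cycleOf_iff.1 hi).1.cycleOf_apply, hskew]
    _ = _ := by rw [prod_neg]
  have hout : ∏ i ∈ c.supportᶜ, A (σ.reverseCycleOf x i) i = ∏ i ∈ c.supportᶜ, A (σ i) i :=
    prod_congr rfl fun i hi => by rw [reverseCycleOf_apply_of_notMem (mem_compl.1 hi)]
  rw [← prod_mul_prod_compl c.support, hin, hout, mul_assoc, prod_mul_prod_compl]

theorem det_eq_sum_of_transpose_eq_neg [LinearOrder n] {A : Matrix n n R} (hA : Aᵀ = -A) :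
    A.det = ∑ σ with σ.oddCycleSupport = ∅, sign σ • ∏ i, A (σ i) i := by
  rw [det_apply, ← sum_filter_add_sum_filter_not _ (fun σ : Perm n => σ.oddCycleSupport = ∅),
    add_eq_left]
  have hterm : ∀ σ : Perm n, σ.oddCycleSupport.Nonempty →
      sign σ.reverseMinOddCycle • ∏ i, A (σ.reverseMinOddCycle i) i =
        -(sign σ • ∏ i, A (σ i) i) := fun σ h => by
    have hodd := (mem_filter.1 (min'_mem _ h)).2
    rw [reverseMinOddCycle_eq_reverseCycleOf h, sign_reverseCycleOf,
      prod_reverseCycleOf_of_transpose_eq_neg hA, hodd.neg_one_pow, neg_one_mul, smul_neg]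
  refine sum_involution (fun σ _ => σ.reverseMinOddCycle) (fun σ hσ => ?_) (fun σ hσ _ => ?_)
    (fun σ hσ => ?_) (fun σ _ => reverseMinOddCycle_involutive σ)
  · rw [hterm σ (nonempty_iff_ne_empty.2 (mem_filter.1 hσ).2), add_neg_cancel]
  · have h := nonempty_iff_ne_empty.2 (mem_filter.1 hσ).2
    rw [reverseMinOddCycle_eq_reverseCycleOf h]
    exact reverseCycleOf_ne_self (mem_filter.1 (min'_mem _ h)).2
  · simpa [oddCycleSupport_reverseMinOddCycle] using hσ

end Matrix

namespace SimpleGraph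

variable {V : Type*} {G : SimpleGraph V}

theorem exists_isPerfectMatching_of_involutive {m : V → V} (hm : Function.Involutive m)
    (hadj : ∀ v, G.Adj v (m v)) : ∃ M : G.Subgraph, M.IsPerfectMatching := by
  let M : G.Subgraph :=
    { verts := Set.univ
      Adj := fun u v => m u = v
      adj_sub := by rintro u _ rfl; exact hadj u
      edge_vert := fun _ => Set.mem_univ _
      symm := ⟨fun u v h => by rw [← h, hm]⟩ }
  exact ⟨M, Subgraph.isPerfectMatching_iff.2 fun v => ⟨m v, rfl, fun _ h => Eq.symm h⟩⟩

theorem Subgraph.IsPerfectMatching.exists_involutive {M : G.Subgraph}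
    (hM : M.IsPerfectMatching) :
    ∃ m : V → V, Function.Involutive m ∧ ∀ u v, M.Adj u v ↔ v = m u := by
  choose m hm huniq using Subgraph.isPerfectMatching_iff.1 hM
  exact ⟨m, fun v => (huniq _ _ (hm v).symm).symm,
    fun u v => ⟨huniq u v, by rintro rfl; exact hm u⟩⟩

end SimpleGraph

section Tutte

open MvPolynomial Equiv Matrix

variable {V F : Type} [Fintype V] [LinearOrder V] [Field F] {G : SimpleGraph V}

theorem tutteMatrix_transpose : (tutteMatrix V F G)ᵀ = -tutteMatrix V F G := by
  refine Matrix.ext fun u v => ?_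
  simp only [transpose_apply, Matrix.neg_apply, tutteMatrix, G.adj_comm v u, Sym2.eq_swap]
  split_ifs with h h1 h2 h2
  · exact absurd (h1.trans h2) (lt_irrefl v)
  · rw [neg_neg]
  · rfl
  · exact absurd (le_antisymm (not_lt.1 h2) (not_lt.1 h1)) (G.ne_of_adj h).symm
  · rw [neg_zero]

theorem adj_of_prod_tutteMatrix_ne_zero {σ : Perm V} (h : ∏ v, tutteMatrix V F G (σ v) v ≠ 0)
    (v : V) : G.Adj (σ v) v := by
  by_contra hv
  exact h (prod_eq_zero (mem_univ v) (by simp [tutteMatrix, hv]))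

theorem eval_tutteMatrix_apply (M : G.Subgraph) (u v : V) :
    eval (fun e => if e ∈ M.edgeSet then 1 else 0) (tutteMatrix V F G u v) =
      if M.Adj u v then (if u < v then 1 else -1) else 0 := by
  by_cases hM : M.Adj u v
  · simp only [tutteMatrix, M.adj_sub hM, hM, if_true]
    split_ifs <;> simp [hM]
  · simp only [tutteMatrix, hM, if_false]
    split_ifs <;> simp [hM]

theorem det_tutteMatrix_ne_zero {M : G.Subgraph} (hM : M.IsPerfectMatching) :
    (tutteMatrix V F G).det ≠ 0 := by
  obtain ⟨m, hm, hMm⟩ := hM.exists_involutive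
  let φ : MvPolynomial (Sym2 V) F →+* F := eval fun e => if e ∈ M.edgeSet then 1 else 0
  have hoff : ∀ u v, u ≠ hm.toPerm m v → (tutteMatrix V F G).map φ u v = 0 :=
    fun u v huv => by
      rw [Matrix.map_apply, eval_tutteMatrix_apply, if_neg]
      rwa [hMm, ← hm.eq_iff, eq_comm]
  have hdiag : ∀ v, (tutteMatrix V F G).map φ (hm.toPerm m v) v ≠ 0 := fun v => by
    rw [Matrix.map_apply, eval_tutteMatrix_apply,
      if_pos (show M.Adj (hm.toPerm m v) v from (hMm _ _).2 (hm v).symm)]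
    split_ifs <;> simp
  intro h
  have hdetB : ((tutteMatrix V F G).map φ).det = 0 := by
    rw [← RingHom.mapMatrix_apply, ← RingHom.map_det, h, map_zero]
  rw [Matrix.det_eq_sign_smul_prod_of_apply_eq_zero _ hoff, smul_eq_zero_iff_eq] at hdetB
  exact prod_ne_zero_iff.2 (fun v _ => hdiag v) hdetB

end Tutte

/-- Tutte's theorem: a finite simple graph `G` has a perfect matching if and only if the
determinant of its Tutte matrix is not the zero polynomial. -/
theorem tutte_matrix_det_ne_zero_iff_perfect_matching
    (V F : Type) [Fintype V] [LinearOrder V] [Field F] (G : SimpleGraph V) :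
    (∃ M : G.Subgraph, M.IsPerfectMatching) ↔ (tutteMatrix V F G).det ≠ 0 := by
  refine ⟨fun ⟨M, hM⟩ => det_tutteMatrix_ne_zero hM, fun hdet => ?_⟩
  rw [Matrix.det_eq_sum_of_transpose_eq_neg tutteMatrix_transpose] at hdet
  obtain ⟨σ, hσ, hterm⟩ := Finset.exists_ne_zero_of_sum_ne_zero hdet
  have hadj := adj_of_prod_tutteMatrix_ne_zero (right_ne_zero_of_smul hterm)
  have heven : ∀ v, Even #(σ.cycleOf v).support := by
    simpa [Equiv.Perm.oddCycleSupport, Finset.filter_eq_empty_iff] using (mem_filter.1 hσ).2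
  obtain ⟨m, hm, hmσ⟩ := σ.exists_involutive_of_even_cycles (fun v => (hadj v).ne) heven
  refine G.exists_isPerfectMatching_of_involutive hm fun v => ?_
  rcases hmσ v with h | h
  · exact h ▸ (hadj v).symm
  · simpa [h] using hadj (σ⁻¹ v)
end

section
/- Let G = G₀ + G₁ be the disjoint union of two simple graphs G₀ = (V, E₀) and G₁ = (V, E₁) on the same vertex set V with |V| = n even, and let T(G₀, G₁) = T(G₀) + y·T(G₁) be the weighted Tutte matrix over F[X_E, y]. Then for each k = 0, 1, …, n/2, the graph G has a perfect matching of weight exactly k if and only if the coefficient of y^k in pf T(G₀, G₁) is not the zero polynomial in F[X_E]. -/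
open scoped Classical

/-- The index `2i` (0-based), corresponding to `2i - 1` in 1-based notation. -/
def evenIdx {m : ℕ} (i : Fin m) : Fin (2 * m) := ⟨2 * i.val, by have := i.isLt; omega⟩

/-- The index `2i + 1` (0-based), corresponding to `2i` in 1-based notation. -/
def oddIdx {m : ℕ} (i : Fin m) : Fin (2 * m) := ⟨2 * i.val + 1, by have := i.isLt; omega⟩

/-- The pfaffian of a `2m × 2m` matrix: the sum over all permutations `σ` of
`{0, …, 2m-1}` satisfying `σ(0) < σ(2) < ⋯ < σ(2m-2)` and `σ(2i) < σ(2i+1)` for each `i`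
of `sgn(σ) · Π_i A_{σ(2i), σ(2i+1)}`. -/
noncomputable def pfaffian {R : Type} [CommRing R] {m : ℕ}
    (A : Matrix (Fin (2 * m)) (Fin (2 * m)) R) : R :=
  ∑ σ ∈ Finset.univ.filter (fun σ : Equiv.Perm (Fin (2 * m)) =>
      (∀ i : Fin m, σ (evenIdx i) < σ (oddIdx i)) ∧
      StrictMono fun i : Fin m => σ (evenIdx i)),
    (Equiv.Perm.sign σ : ℤ) • ∏ i : Fin m, A (σ (evenIdx i)) (σ (oddIdx i))

/-- The Tutte-type matrix of a graph `G` on `Fin n` with entry values `f e` for the edge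
`e` (sign according to the order of the endpoints). -/
noncomputable def tutteAux {R : Type} [CommRing R] {n : ℕ} (G : SimpleGraph (Fin n))
    (f : Sym2 (Fin n) → R) : Matrix (Fin n) (Fin n) R :=
  fun u v => if G.Adj u v then (if u < v then f s(u, v) else - f s(u, v)) else 0

/-- `(M₀, M₁)` is a perfect matching of the disjoint union `G₀ + G₁` of weight `k`:
`M₀` consists of (weight-0) edges of `G₀`, `M₁` of (weight-1) edges of `G₁`, all chosen
edges are pairwise vertex-disjoint, every vertex is covered, and exactly `k` edges come
from `G₁`. -/
def IsPerfectMatchingPairOfWeight {n : ℕ} (G₀ G₁ : SimpleGraph (Fin n))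
    (M₀ M₁ : Finset (Sym2 (Fin n))) (k : ℕ) : Prop :=
  ↑M₀ ⊆ G₀.edgeSet ∧ ↑M₁ ⊆ G₁.edgeSet ∧ Disjoint M₀ M₁ ∧
  ((↑(M₀ ∪ M₁) : Set (Sym2 (Fin n))).Pairwise fun e f => ∀ v, v ∈ e → v ∉ f) ∧
  (∀ v : Fin n, ∃ e ∈ M₀ ∪ M₁, v ∈ e) ∧ M₁.card = k

/-- The weighted Tutte matrix `T(G₀, G₁) = T(G₀) + y·T(G₁)` over `F[X_E][y]`, with one
indeterminate for each edge of the disjoint union `E = E₀ ⊔ E₁` (`Sum.inl` for edges of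
`G₀`, `Sum.inr` for edges of `G₁`) and the extra indeterminate `y = Polynomial.X`. -/
noncomputable def weightedTutteMatrix (F : Type) [Field F] {n : ℕ}
    (G₀ G₁ : SimpleGraph (Fin n)) :
    Matrix (Fin n) (Fin n)
      (Polynomial (MvPolynomial (Sym2 (Fin n) ⊕ Sym2 (Fin n)) F)) :=
  tutteAux (R := Polynomial (MvPolynomial (Sym2 (Fin n) ⊕ Sym2 (Fin n)) F)) G₀ (fun e => Polynomial.C (MvPolynomial.X (Sum.inl e))) +
    (Polynomial.X : Polynomial (MvPolynomial (Sym2 (Fin n) ⊕ Sym2 (Fin n)) F)) •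
      tutteAux (R := Polynomial (MvPolynomial (Sym2 (Fin n) ⊕ Sym2 (Fin n)) F)) G₁ (fun e => Polynomial.C (MvPolynomial.X (Sum.inr e)))

/-!
The terms of the pfaffian are indexed by the pfaffian permutations `σ`, which correspond
bijectively to the perfect matchings `{σ(2i), σ(2i+1)}` of the complete graph. Expanding each
entry `x₀ + y·x₁` of `T(G₀, G₁)` and collecting `y^k` writes the coefficient as a sum of
`± ∏_{i ∈ T} x₁(eᵢ) ∏_{i ∉ T} x₀(eᵢ)` over pfaffian permutations and `k`-subsets `T`; such a
term is nonzero exactly when it describes a perfect matching of weight `k` of `G₀ + G₁`.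
Conversely, evaluating every variable at the indicator of a given matching `(M₀, M₁)`
annihilates all terms but the one describing `(M₀, M₁)`, because a pfaffian permutation is
determined by its set of pairs; so the coefficient evaluates to `±1`.
-/

open Finset Polynomial

theorem Polynomial.coeff_prod_C_add_X_mul_C {ι S : Type*} [Fintype ι] [DecidableEq ι]
    [CommSemiring S] (a b : ι → S) (k : ℕ) :
    (∏ i, (C (a i) + X * C (b i))).coeff k =
      ∑ T ∈ powersetCard k univ, (∏ i ∈ T, b i) * ∏ i ∈ Tᶜ, a i := by
  have hterm : ∀ T : Finset ι, (∏ i ∈ T, X * C (b i)) * ∏ i ∈ univ \ T, C (a i) =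
      monomial #T ((∏ i ∈ T, b i) * ∏ i ∈ Tᶜ, a i) := fun T => by
    rw [prod_mul_distrib, prod_const, ← map_prod, ← map_prod, ← compl_eq_univ_sdiff,
      ← C_mul_X_pow_eq_monomial, C_mul]
    ring
  simp_rw [add_comm (C _), prod_add, finsetSum_coeff, hterm, coeff_monomial,
    powersetCard_eq_filter, sum_filter]

theorem Sym2.eq_and_eq_of_mk_eq_mk_of_lt {α : Type*} [LinearOrder α] {a b c d : α}
    (hab : a < b) (hcd : c < d) (h : s(a, b) = s(c, d)) : a = c ∧ b = d := by
  rcases Sym2.eq_iff.mp h with h' | ⟨rfl, rfl⟩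
  · exact h'
  · exact absurd (hab.trans hcd) (lt_irrefl a)

theorem two_mul_card_filter_lt_apply {α : Type*} [Fintype α] [LinearOrder α] {p : α → α}
    (hp : Function.Involutive p) (hfix : ∀ v, p v ≠ v) :
    2 * #{v | v < p v} = Fintype.card α := by
  have hswap : #{v | v < p v} = #{v | p v < v} :=
    card_bij' (fun v _ => p v) (fun v _ => p v) (by simp [hp _]) (by simp [hp _])
      (fun v _ => hp v) (fun v _ => hp v)
  have hnot : #{v | ¬ v < p v} = #{v | p v < v} :=
    congrArg card (filter_congr fun v _ => by rw [not_lt, le_iff_lt_or_eq, or_iff_left (hfix v)])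
  have hsplit := card_filter_add_card_filter_not (s := univ) fun v => v < p v
  rw [card_univ, hnot, ← hswap] at hsplit
  omega

theorem exists_involutive_forall_mk_mem {V : Type*} {M : Finset (Sym2 V)}
    (hdiag : ∀ e ∈ M, ¬ e.IsDiag)
    (hdisj : (M : Set (Sym2 V)).Pairwise fun e f => ∀ v, v ∈ e → v ∉ f)
    (hcover : ∀ v, ∃ e ∈ M, v ∈ e) :
    ∃ p : V → V, Function.Involutive p ∧ (∀ v, p v ≠ v) ∧ ∀ v, s(v, p v) ∈ M := by
  choose E hEM hvE using hcover
  set p := fun v => Sym2.Mem.other (hvE v)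
  have hE (v : V) : s(v, p v) = E v := Sym2.other_spec (hvE v)
  refine ⟨p, fun v => ?_, fun v h => ?_, fun v => hE v ▸ hEM v⟩
  · have hEp : E (p v) = E v :=
      hdisj.eq (hEM _) (hEM v) fun h => h (p v) (hvE _) (Sym2.other_mem (hvE v))
    rw [← Sym2.congr_right, hE, hEp, ← hE, Sym2.eq_swap]
  · exact hdiag _ (hEM v) (by rw [← hE v, h]; exact Sym2.mk_isDiag_iff.mpr rfl)

section PfaffianPerm

variable {m : ℕ}

theorem evenIdx_injective : Function.Injective (evenIdx (m := m)) := fun i j h => by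
  simp only [evenIdx, Fin.mk.injEq] at h
  exact Fin.ext (by omega)

theorem oddIdx_injective : Function.Injective (oddIdx (m := m)) := fun i j h => by
  simp only [oddIdx, Fin.mk.injEq] at h
  exact Fin.ext (by omega)

theorem evenIdx_ne_oddIdx (i j : Fin m) : evenIdx i ≠ oddIdx j := fun h => by
  simp only [evenIdx, oddIdx, Fin.mk.injEq] at h
  omega

theorem exists_eq_evenIdx_or_eq_oddIdx (j : Fin (2 * m)) :
    ∃ i : Fin m, j = evenIdx i ∨ j = oddIdx i := by
  refine ⟨⟨j / 2, by omega⟩, ?_⟩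
  rcases Nat.even_or_odd j.val with ⟨c, hc⟩ | ⟨c, hc⟩
  · exact Or.inl (Fin.ext (by simp only [evenIdx]; omega))
  · exact Or.inr (Fin.ext (by simp only [oddIdx]; omega))

def interleave {α : Type*} (f g : Fin m → α) (j : Fin (2 * m)) : α :=
  if j.val % 2 = 0 then f ⟨j / 2, by omega⟩ else g ⟨j / 2, by omega⟩

@[simp] theorem interleave_evenIdx {α : Type*} (f g : Fin m → α) (i : Fin m) :
    interleave f g (evenIdx i) = f i := by
  simp only [interleave, evenIdx, Nat.mul_mod_right, if_true]
  congr 1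
  exact Fin.ext (by simp)

@[simp] theorem interleave_oddIdx {α : Type*} (f g : Fin m → α) (i : Fin m) :
    interleave f g (oddIdx i) = g i := by
  simp only [interleave, oddIdx, Nat.mul_add_mod, Nat.one_mod, one_ne_zero, if_false]
  congr 1
  exact Fin.ext (by simp; omega)

theorem interleave_injective {α : Type*} {f g : Fin m → α} (hf : Function.Injective f)
    (hg : Function.Injective g) (hfg : ∀ i j, f i ≠ g j) :
    Function.Injective (interleave f g) := by
  intro j j' h
  obtain ⟨i, rfl | rfl⟩ := exists_eq_evenIdx_or_eq_oddIdx j <;>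
    obtain ⟨i', rfl | rfl⟩ := exists_eq_evenIdx_or_eq_oddIdx j' <;>
    simp only [interleave_evenIdx, interleave_oddIdx] at h
  · rw [hf h]
  · exact absurd h (hfg i i')
  · exact absurd h.symm (hfg i' i)
  · rw [hg h]

def IsPfaffianPerm (σ : Equiv.Perm (Fin (2 * m))) : Prop :=
  (∀ i : Fin m, σ (evenIdx i) < σ (oddIdx i)) ∧ StrictMono fun i : Fin m => σ (evenIdx i)

theorem pfaffian_eq_sum_isPfaffianPerm {R : Type} [CommRing R]
    (A : Matrix (Fin (2 * m)) (Fin (2 * m)) R) :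
    pfaffian A = ∑ σ ∈ univ.filter IsPfaffianPerm,
      (Equiv.Perm.sign σ : ℤ) • ∏ i : Fin m, A (σ (evenIdx i)) (σ (oddIdx i)) := by
  unfold pfaffian IsPfaffianPerm
  congr

def pfaffianEdge (σ : Equiv.Perm (Fin (2 * m))) (i : Fin m) : Sym2 (Fin (2 * m)) :=
  s(σ (evenIdx i), σ (oddIdx i))

theorem eq_of_mem_pfaffianEdge {σ : Equiv.Perm (Fin (2 * m))} {i j : Fin m} {v : Fin (2 * m)}
    (hi : v ∈ pfaffianEdge σ i) (hj : v ∈ pfaffianEdge σ j) : i = j := by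
  simp only [pfaffianEdge, Sym2.mem_iff] at hi hj
  rcases hi with rfl | rfl <;> rcases hj with h | h <;> have h' := σ.injective h
  · exact evenIdx_injective h'
  · exact absurd h' (evenIdx_ne_oddIdx i j)
  · exact absurd h'.symm (evenIdx_ne_oddIdx j i)
  · exact oddIdx_injective h'

theorem pfaffianEdge_injective (σ : Equiv.Perm (Fin (2 * m))) :
    Function.Injective (pfaffianEdge σ) := fun i j h =>
  eq_of_mem_pfaffianEdge (Sym2.mem_mk_left _ _) (by rw [← h]; exact Sym2.mem_mk_left _ _)

theorem exists_mem_pfaffianEdge (σ : Equiv.Perm (Fin (2 * m))) (v : Fin (2 * m)) :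
    ∃ i, v ∈ pfaffianEdge σ i := by
  obtain ⟨i, hi | hi⟩ := exists_eq_evenIdx_or_eq_oddIdx (σ.symm v) <;>
    refine ⟨i, ?_⟩ <;> rw [σ.symm_apply_eq.mp hi]
  exacts [Sym2.mem_mk_left _ _, Sym2.mem_mk_right _ _]

theorem IsPfaffianPerm.eq_of_forall_exists_pfaffianEdge_eq {σ τ : Equiv.Perm (Fin (2 * m))}
    (hσ : IsPfaffianPerm σ) (hτ : IsPfaffianPerm τ)
    (h : ∀ i, ∃ j, pfaffianEdge σ i = pfaffianEdge τ j) : σ = τ := by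
  choose φ hφ using h
  have hpair (i : Fin m) : σ (evenIdx i) = τ (evenIdx (φ i)) ∧ σ (oddIdx i) = τ (oddIdx (φ i)) :=
    Sym2.eq_and_eq_of_mk_eq_mk_of_lt (hσ.1 i) (hτ.1 (φ i)) (hφ i)
  have hφ_mono : StrictMono φ := fun i j hij =>
    hτ.2.lt_iff_lt.mp (by rw [← (hpair i).1, ← (hpair j).1]; exact hσ.2 hij)
  ext j
  obtain ⟨i, rfl | rfl⟩ := exists_eq_evenIdx_or_eq_oddIdx j <;> simp [hpair, hφ_mono.apply_eq]

theorem exists_isPfaffianPerm_of_involutive {p : Fin (2 * m) → Fin (2 * m)}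
    (hp : Function.Involutive p) (hfix : ∀ v, p v ≠ v) :
    ∃ σ, IsPfaffianPerm σ ∧ ∀ i, σ (oddIdx i) = p (σ (evenIdx i)) := by
  have hcard : #{v | v < p v} = m := by
    have := two_mul_card_filter_lt_apply hp hfix
    rw [Fintype.card_fin] at this
    omega
  set ℓ := (univ.filter fun v => v < p v).orderEmbOfFin hcard
  have hℓ (i : Fin m) : ℓ i < p (ℓ i) :=
    (mem_filter.mp ((univ.filter fun v => v < p v).orderEmbOfFin_mem hcard i)).2
  have hinj : Function.Injective (interleave ℓ (p ∘ ℓ)) :=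
    interleave_injective ℓ.injective (hp.injective.comp ℓ.injective) fun i j h =>
      (hℓ j).not_gt (by simpa [h, hp _] using hℓ i)
  refine ⟨Equiv.ofBijective _ (Finite.injective_iff_bijective.mp hinj), ⟨fun i => ?_, ?_⟩,
    fun i => ?_⟩
  · simpa using hℓ i
  · simpa using ℓ.strictMono
  · simp

theorem exists_isPfaffianPerm_mem_iff_exists_pfaffianEdge_eq {M : Finset (Sym2 (Fin (2 * m)))}
    (hdiag : ∀ e ∈ M, ¬ e.IsDiag)
    (hdisj : (M : Set (Sym2 (Fin (2 * m)))).Pairwise fun e f => ∀ v, v ∈ e → v ∉ f)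
    (hcover : ∀ v, ∃ e ∈ M, v ∈ e) :
    ∃ σ, IsPfaffianPerm σ ∧ ∀ e, e ∈ M ↔ ∃ i, pfaffianEdge σ i = e := by
  obtain ⟨p, hp, hfix, hpM⟩ := exists_involutive_forall_mk_mem hdiag hdisj hcover
  obtain ⟨σ, hσ, hσp⟩ := exists_isPfaffianPerm_of_involutive hp hfix
  have hmem (i : Fin m) : pfaffianEdge σ i ∈ M := by rw [pfaffianEdge, hσp]; exact hpM _
  refine ⟨σ, hσ, fun e => ⟨fun he => ?_, fun ⟨i, hi⟩ => hi ▸ hmem i⟩⟩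
  obtain ⟨i, hi⟩ := exists_mem_pfaffianEdge σ e.out.1
  exact ⟨i, hdisj.eq (hmem i) he fun h => h _ hi (Sym2.out_fst_mem e)⟩

theorem IsPfaffianPerm.forall_pfaffianEdge_mem_iff {M₀ M₁ : Finset (Sym2 (Fin (2 * m)))}
    (hdisj : Disjoint M₀ M₁) {σ₀ σ : Equiv.Perm (Fin (2 * m))} (hσ₀ : IsPfaffianPerm σ₀)
    (hσ : IsPfaffianPerm σ) (hσ₀M : ∀ e, e ∈ M₀ ∪ M₁ ↔ ∃ i, pfaffianEdge σ₀ i = e)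
    (T : Finset (Fin m)) :
    ((∀ i ∈ T, pfaffianEdge σ i ∈ M₁) ∧ ∀ i ∈ Tᶜ, pfaffianEdge σ i ∈ M₀) ↔
      σ = σ₀ ∧ T = univ.filter fun i => pfaffianEdge σ₀ i ∈ M₁ := by
  constructor
  · rintro ⟨h₁, h₀⟩
    have hM (i : Fin m) : pfaffianEdge σ i ∈ M₀ ∪ M₁ := by
      by_cases hi : i ∈ T
      exacts [mem_union_right _ (h₁ i hi), mem_union_left _ (h₀ i (mem_compl.mpr hi))]
    obtain rfl := hσ.eq_of_forall_exists_pfaffianEdge_eq hσ₀ fun i =>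
      ((hσ₀M _).mp (hM i)).imp fun _ => Eq.symm
    refine ⟨rfl, ext fun i => ⟨fun hi => by simp [h₁ i hi], fun hi => by_contra fun hT => ?_⟩⟩
    exact disjoint_left.mp hdisj (h₀ i (mem_compl.mpr hT)) (mem_filter.mp hi).2
  · rintro ⟨rfl, rfl⟩
    refine ⟨fun i hi => (mem_filter.mp hi).2, fun i hi => ?_⟩
    simp only [mem_compl, mem_filter, mem_univ, true_and] at hi
    exact (mem_union.mp ((hσ₀M _).mpr ⟨i, rfl⟩)).resolve_right hi

theorem isPerfectMatchingPairOfWeight_image_pfaffianEdge {G₀ G₁ : SimpleGraph (Fin (2 * m))}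
    {σ : Equiv.Perm (Fin (2 * m))} {T : Finset (Fin m)}
    (h₁ : ∀ i ∈ T, pfaffianEdge σ i ∈ G₁.edgeSet) (h₀ : ∀ i ∈ Tᶜ, pfaffianEdge σ i ∈ G₀.edgeSet) :
    IsPerfectMatchingPairOfWeight G₀ G₁ (Tᶜ.image (pfaffianEdge σ)) (T.image (pfaffianEdge σ))
      #T := by
  have hunion :
      Tᶜ.image (pfaffianEdge σ) ∪ T.image (pfaffianEdge σ) = univ.image (pfaffianEdge σ) := by
    rw [← image_union, union_comm, union_compl]
  refine ⟨?_, ?_, (disjoint_image (pfaffianEdge_injective σ)).mpr disjoint_compl_left, ?_, ?_,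
    card_image_of_injective _ (pfaffianEdge_injective σ)⟩
  · rw [coe_image, Set.image_subset_iff]
    exact fun i hi => h₀ i (mem_coe.mp hi)
  · rw [coe_image, Set.image_subset_iff]
    exact fun i hi => h₁ i (mem_coe.mp hi)
  · rw [hunion, coe_image]
    rintro _ ⟨i, -, rfl⟩ _ ⟨j, -, rfl⟩ hne v hi hj
    exact hne (congrArg _ (eq_of_mem_pfaffianEdge hi hj))
  · intro v
    obtain ⟨i, hi⟩ := exists_mem_pfaffianEdge σ v
    exact ⟨_, hunion ▸ mem_image_of_mem _ (mem_univ i), hi⟩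

end PfaffianPerm

section WeightedTutteMatrix

variable (F : Type) [Field F] {m : ℕ} (G₀ G₁ : SimpleGraph (Fin (2 * m)))

theorem weightedTutteMatrix_apply_of_lt {n : ℕ} (G₀ G₁ : SimpleGraph (Fin n)) {u v : Fin n}
    (h : u < v) :
    weightedTutteMatrix F G₀ G₁ u v =
      C (G₀.edgeSet.indicator (fun e => MvPolynomial.X (Sum.inl e)) s(u, v)) +
        X * C (G₁.edgeSet.indicator (fun e => MvPolynomial.X (Sum.inr e)) s(u, v)) := by
  simp only [weightedTutteMatrix, tutteAux, Matrix.add_apply, Matrix.smul_apply, h, if_true,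
    smul_eq_mul, Set.indicator_apply, SimpleGraph.mem_edgeSet, apply_ite C, C_0, mul_ite,
    mul_zero]

noncomputable def pfaffianMonomial (σ : Equiv.Perm (Fin (2 * m))) (T : Finset (Fin m)) :
    MvPolynomial (Sym2 (Fin (2 * m)) ⊕ Sym2 (Fin (2 * m))) F :=
  (∏ i ∈ T, G₁.edgeSet.indicator (fun e => MvPolynomial.X (Sum.inr e)) (pfaffianEdge σ i)) *
    ∏ i ∈ Tᶜ, G₀.edgeSet.indicator (fun e => MvPolynomial.X (Sum.inl e)) (pfaffianEdge σ i)

theorem coeff_pfaffian_weightedTutteMatrix (k : ℕ) :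
    (pfaffian (weightedTutteMatrix F G₀ G₁)).coeff k =
      ∑ σ ∈ univ.filter IsPfaffianPerm, (Equiv.Perm.sign σ : ℤ) •
        ∑ T ∈ powersetCard k univ, pfaffianMonomial F G₀ G₁ σ T := by
  rw [pfaffian_eq_sum_isPfaffianPerm, finsetSum_coeff]
  refine sum_congr rfl fun σ hσ => ?_
  rw [coeff_smul, prod_congr rfl fun i _ =>
    weightedTutteMatrix_apply_of_lt F G₀ G₁ ((mem_filter.mp hσ).2.1 i), coeff_prod_C_add_X_mul_C]
  rfl

theorem pfaffianMonomial_ne_zero_iff {σ : Equiv.Perm (Fin (2 * m))} {T : Finset (Fin m)} :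
    pfaffianMonomial F G₀ G₁ σ T ≠ 0 ↔
      (∀ i ∈ T, pfaffianEdge σ i ∈ G₁.edgeSet) ∧ ∀ i ∈ Tᶜ, pfaffianEdge σ i ∈ G₀.edgeSet := by
  simp [pfaffianMonomial, prod_ne_zero_iff, MvPolynomial.X_ne_zero]

theorem eval_pfaffianMonomial {M₀ M₁ : Finset (Sym2 (Fin (2 * m)))} (hM₀ : ↑M₀ ⊆ G₀.edgeSet)
    (hM₁ : ↑M₁ ⊆ G₁.edgeSet) (σ : Equiv.Perm (Fin (2 * m))) (T : Finset (Fin m)) :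
    MvPolynomial.eval (Sum.elim (fun e => if e ∈ M₀ then 1 else 0)
        (fun e => if e ∈ M₁ then 1 else 0)) (pfaffianMonomial F G₀ G₁ σ T) =
      if (∀ i ∈ T, pfaffianEdge σ i ∈ M₁) ∧ ∀ i ∈ Tᶜ, pfaffianEdge σ i ∈ M₀ then 1 else 0 := by
  set ρ : Sym2 (Fin (2 * m)) ⊕ Sym2 (Fin (2 * m)) → F :=
    Sum.elim (fun e => if e ∈ M₀ then 1 else 0) (fun e => if e ∈ M₁ then 1 else 0)
  have heval {G : SimpleGraph (Fin (2 * m))} {M : Finset (Sym2 (Fin (2 * m)))}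
      (hM : ↑M ⊆ G.edgeSet) {ι : Sym2 (Fin (2 * m)) → Sym2 (Fin (2 * m)) ⊕ Sym2 (Fin (2 * m))}
      (hρ : ∀ e, ρ (ι e) = if e ∈ M then 1 else 0) (e : Sym2 (Fin (2 * m))) :
      MvPolynomial.eval ρ (G.edgeSet.indicator (fun e => MvPolynomial.X (ι e)) e) =
        if e ∈ M then 1 else 0 := by
    by_cases he : e ∈ M
    · simp [hρ, he, Set.indicator_of_mem (hM he)]
    · by_cases he' : e ∈ G.edgeSet <;> simp [hρ, he, he']
  simp only [pfaffianMonomial, map_mul, map_prod, heval hM₀ (ι := Sum.inl) fun _ => rfl,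
    heval hM₁ (ι := Sum.inr) fun _ => rfl, prod_boole, ite_zero_mul_ite_zero, mul_one]

theorem coeff_pfaffian_weightedTutteMatrix_ne_zero {M₀ M₁ : Finset (Sym2 (Fin (2 * m)))}
    {k : ℕ} (hM : IsPerfectMatchingPairOfWeight G₀ G₁ M₀ M₁ k) :
    (pfaffian (weightedTutteMatrix F G₀ G₁)).coeff k ≠ 0 := by
  obtain ⟨hM₀, hM₁, hdisj, hpair, hcover, rfl⟩ := hM
  have hdiag : ∀ e ∈ M₀ ∪ M₁, ¬ e.IsDiag := by
    rintro e he
    rcases mem_union.mp he with he | he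
    exacts [G₀.not_isDiag_of_mem_edgeSet (hM₀ he), G₁.not_isDiag_of_mem_edgeSet (hM₁ he)]
  obtain ⟨σ₀, hσ₀, hσ₀M⟩ := exists_isPfaffianPerm_mem_iff_exists_pfaffianEdge_eq hdiag hpair hcover
  have hS₀ : #(univ.filter fun i => pfaffianEdge σ₀ i ∈ M₁) = #M₁ := by
    rw [← card_image_of_injective _ (pfaffianEdge_injective σ₀)]
    congr 1
    ext e
    simp only [mem_image, mem_filter, mem_univ, true_and]
    refine ⟨fun ⟨i, hi, he⟩ => he ▸ hi, fun he => ?_⟩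
    obtain ⟨i, rfl⟩ := (hσ₀M e).mp (mem_union_right _ he)
    exact ⟨i, he, rfl⟩
  have heval : MvPolynomial.eval (Sum.elim (fun e => if e ∈ M₀ then 1 else 0)
      (fun e => if e ∈ M₁ then 1 else 0)) ((pfaffian (weightedTutteMatrix F G₀ G₁)).coeff #M₁) =
      ((Equiv.Perm.sign σ₀ : ℤ) : F) := by
    rw [coeff_pfaffian_weightedTutteMatrix, map_sum]
    simp_rw [map_zsmul, map_sum, eval_pfaffianMonomial F G₀ G₁ hM₀ hM₁]
    rw [sum_congr rfl fun σ hσ => by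
      rw [sum_congr rfl fun T _ => if_congr
        (hσ₀.forall_pfaffianEdge_mem_iff hdisj (mem_filter.mp hσ).2 hσ₀M T) rfl rfl]]
    simp [ite_and, sum_ite_eq', hS₀, hσ₀]
  intro hzero
  rw [hzero, map_zero] at heval
  rcases Int.units_eq_one_or (Equiv.Perm.sign σ₀) with h | h <;> simp [h] at heval

theorem exists_isPerfectMatchingPairOfWeight_of_coeff_ne_zero {k : ℕ}
    (h : (pfaffian (weightedTutteMatrix F G₀ G₁)).coeff k ≠ 0) :
    ∃ M₀ M₁, IsPerfectMatchingPairOfWeight G₀ G₁ M₀ M₁ k := by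
  rw [coeff_pfaffian_weightedTutteMatrix] at h
  obtain ⟨σ, -, hσ⟩ := exists_ne_zero_of_sum_ne_zero h
  obtain ⟨T, hT, hT₀⟩ := exists_ne_zero_of_sum_ne_zero (right_ne_zero_of_smul hσ)
  obtain ⟨h₁, h₀⟩ := (pfaffianMonomial_ne_zero_iff F G₀ G₁).mp hT₀
  rw [← (mem_powersetCard_univ.mp hT)]
  exact ⟨_, _, isPerfectMatchingPairOfWeight_image_pfaffianEdge h₁ h₀⟩

end WeightedTutteMatrix

theorem exact_matching_iff_coeff_pfaffian_ne_zero_general (F : Type) [Field F] (m : ℕ)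
    (G₀ G₁ : SimpleGraph (Fin (2 * m))) (k : ℕ) :
    (∃ M₀ M₁, IsPerfectMatchingPairOfWeight G₀ G₁ M₀ M₁ k) ↔
      (pfaffian (weightedTutteMatrix F G₀ G₁)).coeff k ≠ 0 :=
  ⟨fun ⟨_, _, hM⟩ => coeff_pfaffian_weightedTutteMatrix_ne_zero F G₀ G₁ hM,
    exists_isPerfectMatchingPairOfWeight_of_coeff_ne_zero F G₀ G₁⟩

/-- For each `k = 0, 1, …, n/2`, the graph `G = G₀ + G₁` on `n = 2m` vertices has a
perfect matching of weight exactly `k` if and only if the coefficient of `y^k` in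
`pf T(G₀, G₁)` is not the zero polynomial in `F[X_E]`. -/
theorem exact_matching_iff_coeff_pfaffian_ne_zero (F : Type) [Field F] (m : ℕ)
    (hm : 0 < m) (G₀ G₁ : SimpleGraph (Fin (2 * m))) (k : ℕ) (hk : k ≤ m) :
    (∃ M₀ M₁, IsPerfectMatchingPairOfWeight G₀ G₁ M₀ M₁ k) ↔
      (pfaffian (weightedTutteMatrix F G₀ G₁)).coeff k ≠ 0 :=
  exact_matching_iff_coeff_pfaffian_ne_zero_general F m G₀ G₁ k
end

section
/- Camerini–Galbiati–Maffioli weighted matrix formulation of linear matroid parity: let (Z, L₀, L₁) be a 0/1-weighted LMP instance with Z ∈ F^{V × U}, |V| = n even, and line set L = L₀ ⊔ L₁, and set Y(Z, L₀, L₁) := Y(Z, L₀) + y·Y(Z, L₁) over F[X_L, y]. Then, for each k = 0, 1, …, n/2, the instance has a parity base of weight exactly k if and only if the coefficient of y^k in pf Y(Z, L₀, L₁) is not the zero polynomial in F[X_L]. -/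
/-!
Expanding the Pfaffian multilinearly in the lines gives
`pf Y = ∑ g, (∏ i, c_{g i}) · mixedPf (z_{g i,1} ∧ z_{g i,2})` over assignments `g : Fin m → L`,
where `c_ℓ` is `x_ℓ` or `y x_ℓ`. Summing a mixed Pfaffian over all reorderings of its lines gives
the determinant of the `2m` chosen columns, because every permutation of `Fin (2m)` factors
uniquely into a Pfaffian permutation, a permutation of the pairs and swaps inside pairs. So the
coefficient of `x^g y^k` is `det [z_{g 0,1} z_{g 0,2} …]` when `g` uses distinct lines, and it
vanishes otherwise: there the determinant has two equal columns, and the size of the stabilizer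
can be cancelled in the generic case over `ℤ`. Parity bases of weight `k` are exactly the column
sets of such injective `g` with nonzero determinant.
-/

open scoped Classical

/-- The weighted Lovász matrix `Y(Z, L₀, L₁) = Y(Z, L₀) + y·Y(Z, L₁)` of a 0/1-weighted
LMP instance over `F[X_L][y]`: the columns of `Z` are indexed by `L × Bool`, the lines of
weight `1` form the subset `L₁ ⊆ L` (and `L₀ = L \ L₁`), `a ∧ b = abᵀ − baᵀ`, and
`y = Polynomial.X`. -/
noncomputable def weightedLovaszMatrix (F : Type) [Field F] {n : ℕ} {L : Type}
    [Fintype L] (Z : Matrix (Fin n) (L × Bool) F) (L₁ : Finset L) :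
    Matrix (Fin n) (Fin n) (Polynomial (MvPolynomial L F)) :=
  ∑ ℓ : L,
    ((if ℓ ∈ L₁ then Polynomial.X * Polynomial.C (MvPolynomial.X ℓ)
        else Polynomial.C (MvPolynomial.X ℓ)) : Polynomial (MvPolynomial L F)) •
      (Matrix.vecMulVec (fun i => Polynomial.C (MvPolynomial.C (Z i (ℓ, false))))
          (fun i => Polynomial.C (MvPolynomial.C (Z i (ℓ, true)))) -
        Matrix.vecMulVec (fun i => Polynomial.C (MvPolynomial.C (Z i (ℓ, true))))
          (fun i => Polynomial.C (MvPolynomial.C (Z i (ℓ, false)))))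

namespace LovaszPfaffian

open Equiv Finset

variable {m : ℕ}

section PairIndex

def pairEquiv (m : ℕ) : Fin m × Bool ≃ Fin (2 * m) where
  toFun p := if p.2 then oddIdx p.1 else evenIdx p.1
  invFun q := (⟨q / 2, by omega⟩, decide (q.val % 2 = 1))
  left_inv := by
    rintro ⟨i, _ | _⟩ <;> simp [evenIdx, oddIdx, Fin.ext_iff]
    omega
  right_inv q := by
    rcases Nat.mod_two_eq_zero_or_one q with h | h <;>
      simp [h, evenIdx, oddIdx, Fin.ext_iff] <;> omega

@[simp] lemma pairEquiv_false (i : Fin m) : pairEquiv m (i, false) = evenIdx i := rfl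

@[simp] lemma pairEquiv_true (i : Fin m) : pairEquiv m (i, true) = oddIdx i := rfl

@[simp] lemma pairEquiv_symm_evenIdx (i : Fin m) : (pairEquiv m).symm (evenIdx i) = (i, false) :=
  (pairEquiv m).symm_apply_eq.mpr rfl

@[simp] lemma pairEquiv_symm_oddIdx (i : Fin m) : (pairEquiv m).symm (oddIdx i) = (i, true) :=
  (pairEquiv m).symm_apply_eq.mpr rfl

lemma evenIdx_injective : Function.Injective (evenIdx (m := m)) := fun _ _ h => by
  simpa using congrArg (pairEquiv m).symm h

@[simp] lemma evenIdx_inj {i j : Fin m} : evenIdx i = evenIdx j ↔ i = j :=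
  evenIdx_injective.eq_iff

lemma evenIdx_ne_oddIdx (i j : Fin m) : evenIdx i ≠ oddIdx j := fun h => by
  simpa using congrArg (pairEquiv m).symm h

lemma prod_fin_two_mul {M : Type*} [CommMonoid M] (f : Fin (2 * m) → M) :
    ∏ q, f q = ∏ i, f (evenIdx i) * f (oddIdx i) := by
  rw [← (pairEquiv m).prod_comp, Fintype.prod_prod_type]
  simp [mul_comm]

end PairIndex

section PairPerm

def pairSwap (s : Fin m → Bool) : Perm (Fin (2 * m)) :=
  (pairEquiv m).permCongr (prodCongrRight fun i => if s i then swap false true else 1)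

def pairPerm (π : Perm (Fin m)) : Perm (Fin (2 * m)) :=
  (pairEquiv m).permCongr (prodCongrLeft fun _ => π)

@[simp] lemma pairSwap_evenIdx (s : Fin m → Bool) (i : Fin m) :
    pairSwap s (evenIdx i) = if s i then oddIdx i else evenIdx i := by
  cases h : s i <;> simp [pairSwap, permCongr_apply, h]

@[simp] lemma pairSwap_oddIdx (s : Fin m → Bool) (i : Fin m) :
    pairSwap s (oddIdx i) = if s i then evenIdx i else oddIdx i := by
  cases h : s i <;> simp [pairSwap, permCongr_apply, h]

lemma pairSwap_mul_self (s : Fin m → Bool) : pairSwap s * pairSwap s = 1 := by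
  ext q
  obtain ⟨⟨i, _ | _⟩, rfl⟩ := (pairEquiv m).surjective q <;>
    cases h : s i <;> simp [h]

@[simp] lemma mul_pairSwap_mul_pairSwap (τ : Perm (Fin (2 * m))) (s : Fin m → Bool) :
    τ * pairSwap s * pairSwap s = τ := by
  rw [mul_assoc, pairSwap_mul_self, mul_one]

lemma sign_pairSwap (s : Fin m → Bool) :
    Perm.sign (pairSwap s) = ∏ i, if s i then -1 else 1 := by
  rw [pairSwap, Perm.sign_permCongr, Perm.sign_prodCongrRight]
  exact prod_congr rfl fun i _ => by cases s i <;> simp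

@[simp] lemma pairPerm_evenIdx (π : Perm (Fin m)) (i : Fin m) :
    pairPerm π (evenIdx i) = evenIdx (π i) := by
  simp [pairPerm, permCongr_apply]

@[simp] lemma pairPerm_oddIdx (π : Perm (Fin m)) (i : Fin m) :
    pairPerm π (oddIdx i) = oddIdx (π i) := by
  simp [pairPerm, permCongr_apply]

@[simp] lemma pairPerm_inv (π : Perm (Fin m)) : (pairPerm π)⁻¹ = pairPerm π⁻¹ := by
  refine inv_eq_of_mul_eq_one_right (Perm.ext fun q => ?_)
  obtain ⟨⟨i, _ | _⟩, rfl⟩ := (pairEquiv m).surjective q <;> simp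

@[simp] lemma sign_pairPerm (π : Perm (Fin m)) : Perm.sign (pairPerm π) = 1 := by
  rw [pairPerm, Perm.sign_permCongr, Perm.sign_prodCongrLeft]
  simp

end PairPerm

def pfaffianPerms (m : ℕ) : Finset (Perm (Fin (2 * m))) :=
  univ.filter fun σ => (∀ i : Fin m, σ (evenIdx i) < σ (oddIdx i)) ∧
    StrictMono fun i : Fin m => σ (evenIdx i)

section Decomposition

/-! Every permutation `τ` of `Fin (2 * m)` factors uniquely as
`τ = σ * (pairPerm π)⁻¹ * pairSwap s` with `σ ∈ pfaffianPerms m`. -/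

def pairDescents (τ : Perm (Fin (2 * m))) : Fin m → Bool :=
  fun i => decide (τ (oddIdx i) < τ (evenIdx i))

def pairOrder (τ : Perm (Fin (2 * m))) : Perm (Fin m) :=
  Tuple.sort fun i => (τ * pairSwap (pairDescents τ)) (evenIdx i)

def pfaffianPart (τ : Perm (Fin (2 * m))) : Perm (Fin (2 * m)) :=
  τ * pairSwap (pairDescents τ) * pairPerm (pairOrder τ)

lemma pfaffianPart_mem (τ : Perm (Fin (2 * m))) : pfaffianPart τ ∈ pfaffianPerms m := by
  set τ' := τ * pairSwap (pairDescents τ)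
  have lt : ∀ i, τ' (evenIdx i) < τ' (oddIdx i) := by
    intro i
    have hne : τ (evenIdx i) ≠ τ (oddIdx i) := τ.injective.ne (evenIdx_ne_oddIdx i i)
    by_cases h : τ (oddIdx i) < τ (evenIdx i)
    · simp [τ', pairDescents, h]
    · simpa [τ', pairDescents, h] using lt_of_le_of_ne (not_lt.mp h) hne
  have mono : StrictMono fun i => τ' (evenIdx (pairOrder τ i)) :=
    (Tuple.monotone_sort _).strictMono_of_injective
      (τ'.injective.comp evenIdx_injective |>.comp (pairOrder τ).injective)
  simp only [pfaffianPerms, mem_filter, mem_univ, true_and, pfaffianPart, Perm.mul_apply,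
    pairPerm_evenIdx, pairPerm_oddIdx]
  exact ⟨fun i => lt _, mono⟩

lemma pfaffianPart_mul_pairSwap (τ : Perm (Fin (2 * m))) :
    pfaffianPart τ * (pairPerm (pairOrder τ))⁻¹ * pairSwap (pairDescents τ) = τ := by
  rw [pfaffianPart, mul_inv_cancel_right, mul_pairSwap_mul_pairSwap]

variable {σ : Perm (Fin (2 * m))} (π : Perm (Fin m)) (s : Fin m → Bool)

lemma pairDescents_of_mem (hσ : σ ∈ pfaffianPerms m) :
    pairDescents (σ * (pairPerm π)⁻¹ * pairSwap s) = s := by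
  have lt := (mem_filter.mp hσ).2.1
  funext i
  cases h : s i <;> simp [pairDescents, h, lt, (lt _).le]

lemma pairOrder_of_mem (hσ : σ ∈ pfaffianPerms m) :
    pairOrder (σ * (pairPerm π)⁻¹ * pairSwap s) = π := by
  have mono := (mem_filter.mp hσ).2.2
  rw [pairOrder, pairDescents_of_mem π s hσ, mul_pairSwap_mul_pairSwap]
  set f := fun i => (σ * (pairPerm π)⁻¹) (evenIdx i)
  have hf : Function.Injective f := fun i j h => by simpa [f] using h
  have hsort : f ∘ π = f ∘ Tuple.sort f :=
    Tuple.comp_sort_eq_comp_iff_monotone.mpr (by simpa [f, Function.comp_def] using mono.monotone)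
  exact (Perm.ext fun i => hf (congrFun hsort i)).symm

lemma pfaffianPart_of_mem (hσ : σ ∈ pfaffianPerms m) :
    pfaffianPart (σ * (pairPerm π)⁻¹ * pairSwap s) = σ := by
  rw [pfaffianPart, pairDescents_of_mem π s hσ, pairOrder_of_mem π s hσ,
    mul_pairSwap_mul_pairSwap, inv_mul_cancel_right]

theorem sum_perm_eq_sum_pfaffianPerms {M : Type*} [AddCommMonoid M] (f : Perm (Fin (2 * m)) → M) :
    ∑ τ, f τ = ∑ π, ∑ σ ∈ pfaffianPerms m, ∑ s, f (σ * (pairPerm π)⁻¹ * pairSwap s) := by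
  simp only [← sum_product']
  symm
  refine sum_nbij' (fun t => t.2.1 * (pairPerm t.1)⁻¹ * pairSwap t.2.2)
    (fun τ => (pairOrder τ, pfaffianPart τ, pairDescents τ)) (by simp)
    (fun τ _ => by simp [pfaffianPart_mem]) (fun t ht => ?_)
    (fun τ _ => pfaffianPart_mul_pairSwap τ) (fun _ _ => rfl)
  obtain ⟨π, σ, s⟩ := t
  have hσ : σ ∈ pfaffianPerms m := by simpa using ht
  simp only [pairOrder_of_mem π s hσ, pfaffianPart_of_mem π s hσ, pairDescents_of_mem π s hσ]

end Decomposition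

section MixedPfaffian

variable {R : Type*} [CommRing R]

/-- The polarization of the Pfaffian, so that `pfaffian A = mixedPf fun _ => A`. -/
def mixedPf (A : Fin m → Matrix (Fin (2 * m)) (Fin (2 * m)) R) : R :=
  ∑ σ ∈ pfaffianPerms m, (Perm.sign σ : ℤ) • ∏ i, A i (σ (evenIdx i)) (σ (oddIdx i))

theorem pfaffian_sum_smul {R : Type} [CommRing R] {L : Type*} [Fintype L] (c : L → R)
    (A : L → Matrix (Fin (2 * m)) (Fin (2 * m)) R) :
    pfaffian (∑ ℓ, c ℓ • A ℓ) = ∑ g : Fin m → L, (∏ i, c (g i)) * mixedPf (A ∘ g) := by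
  simp only [pfaffian, mixedPf, Matrix.sum_apply, Matrix.smul_apply, smul_eq_mul,
    Fintype.prod_sum, prod_mul_distrib, smul_sum, mul_sum, mul_smul_comm]
  exact sum_comm

lemma map_mixedPf {S : Type*} [CommRing S] (φ : R →+* S)
    (A : Fin m → Matrix (Fin (2 * m)) (Fin (2 * m)) R) :
    φ (mixedPf A) = mixedPf fun i => (A i).map φ := by
  simp [mixedPf, map_sum, map_prod]

variable {n : ℕ} {L : Type*}

/-- The paper's `z_{ℓ,1} ∧ z_{ℓ,2}`. -/
def lineWedge (Z : Matrix (Fin n) (L × Bool) R) (ℓ : L) : Matrix (Fin n) (Fin n) R :=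
  Matrix.vecMulVec (fun p => Z p (ℓ, false)) (fun p => Z p (ℓ, true)) -
    Matrix.vecMulVec (fun p => Z p (ℓ, true)) (fun p => Z p (ℓ, false))

@[simp] lemma lineWedge_apply (Z : Matrix (Fin n) (L × Bool) R) (ℓ : L) (p q : Fin n) :
    lineWedge Z ℓ p q = Z p (ℓ, false) * Z q (ℓ, true) - Z p (ℓ, true) * Z q (ℓ, false) := by
  simp [lineWedge, Matrix.vecMulVec_apply]

lemma lineWedge_map {S : Type*} [CommRing S] (φ : R →+* S) (Z : Matrix (Fin n) (L × Bool) R)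
    (ℓ : L) : lineWedge (Z.map φ) ℓ = (lineWedge Z ℓ).map φ := by
  ext p q
  simp

lemma sign_mul_prod_submatrix_pairEquiv (Z : Matrix (Fin (2 * m)) (Fin m × Bool) R)
    (σ : Perm (Fin (2 * m))) (π : Perm (Fin m)) (s : Fin m → Bool) :
    (Perm.sign (σ * (pairPerm π)⁻¹ * pairSwap s) : R) *
        ∏ q, Z ((σ * (pairPerm π)⁻¹ * pairSwap s) q) ((pairEquiv m).symm q) =
      (Perm.sign σ : ℤ) • ∏ j, if s j then
        -(Z (σ (evenIdx (π⁻¹ j))) (j, true) * Z (σ (oddIdx (π⁻¹ j))) (j, false))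
      else Z (σ (evenIdx (π⁻¹ j))) (j, false) * Z (σ (oddIdx (π⁻¹ j))) (j, true) := by
  rw [prod_fin_two_mul, map_mul, map_mul, sign_pairSwap, pairPerm_inv, sign_pairPerm, mul_one,
    zsmul_eq_mul]
  push_cast
  rw [mul_assoc, ← prod_mul_distrib]
  congr 1
  refine prod_congr rfl fun j _ => ?_
  cases h : s j <;> simp [h, mul_comm]

theorem sum_mixedPf_lineWedge_comp_perm (Z : Matrix (Fin (2 * m)) (Fin m × Bool) R) :
    ∑ π : Perm (Fin m), mixedPf (lineWedge Z ∘ π) = (Z.submatrix id (pairEquiv m).symm).det := by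
  rw [Matrix.det_apply', sum_perm_eq_sum_pfaffianPerms]
  refine sum_congr rfl fun π _ => sum_congr rfl fun σ _ => ?_
  simp only [Matrix.submatrix_apply, id, sign_mul_prod_submatrix_pairEquiv, ← smul_sum]
  congr 1
  rw [← Fintype.prod_sum fun j (b : Bool) => if b then
      -(Z (σ (evenIdx (π⁻¹ j))) (j, true) * Z (σ (oddIdx (π⁻¹ j))) (j, false))
    else Z (σ (evenIdx (π⁻¹ j))) (j, false) * Z (σ (oddIdx (π⁻¹ j))) (j, true)]
  refine Fintype.prod_equiv π _ _ fun i => ?_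
  simp [sub_eq_add_neg, add_comm]

end MixedPfaffian

section Orbit

variable {L : Type*}

/-- The exponent of the monomial `∏ i, x_{g i}`. -/
noncomputable def lineCount (g : Fin m → L) : L →₀ ℕ := ∑ i, Finsupp.single (g i) 1

lemma lineCount_apply (g : Fin m → L) (ℓ : L) : lineCount g ℓ = #{i | g i = ℓ} := by
  simp only [lineCount, Finsupp.finsetSum_apply, Finsupp.single_apply, card_filter]

lemma lineCount_eq_iff {g h : Fin m → L} :
    lineCount g = lineCount h ↔ ∃ π : Perm (Fin m), h ∘ π = g := by
  refine ⟨fun hgh => ?_, ?_⟩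
  · have fiber (ℓ : L) : {i // g i = ℓ} ≃ {i // h i = ℓ} := Fintype.equivOfCardEq <| by
      simpa [Fintype.card_subtype, lineCount_apply] using DFunLike.congr_fun hgh ℓ
    refine ⟨(sigmaFiberEquiv g).symm.trans ((sigmaCongrRight fiber).trans (sigmaFiberEquiv h)),
      funext fun i => ?_⟩
    exact ((fiber (g i)) ⟨i, rfl⟩).2
  · rintro ⟨π, rfl⟩
    exact Equiv.sum_comp π fun i => Finsupp.single (h i) 1

lemma card_comp_perm_eq (g : Fin m → L) (π₀ : Perm (Fin m)) :
    #{π : Perm (Fin m) | g ∘ π = g ∘ π₀} = #{π : Perm (Fin m) | g ∘ π = g} := by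
  refine card_equiv (Equiv.mulRight π₀⁻¹) fun π => ?_
  simp only [mem_filter, mem_univ, true_and, coe_mulRight, Perm.coe_mul, ← Function.comp_assoc]
  exact (Equiv.comp_symm_eq π₀ _ _).symm

/-- Orbit–stabilizer for the action of `Perm (Fin m)` on assignments. -/
theorem card_stabilizer_smul_sum_lineCount_eq [Fintype L] {M : Type*} [AddCommMonoid M]
    (f : (Fin m → L) → M) (g₀ : Fin m → L) :
    #{π : Perm (Fin m) | g₀ ∘ π = g₀} • ∑ g with lineCount g = lineCount g₀, f g =
      ∑ π : Perm (Fin m), f (g₀ ∘ π) := by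
  have orbit : univ.image (fun π : Perm (Fin m) => g₀ ∘ π) =
      univ.filter fun g => lineCount g = lineCount g₀ := by
    ext g
    simp [lineCount_eq_iff]
  rw [sum_comp f fun π : Perm (Fin m) => g₀ ∘ π, orbit, smul_sum]
  refine sum_congr rfl fun g hg => ?_
  obtain ⟨π₀, rfl⟩ := lineCount_eq_iff.mp (mem_filter.mp hg).2
  rw [card_comp_perm_eq]

noncomputable def lineWeight (L₁ : Finset L) (g : Fin m → L) : ℕ := #{i | g i ∈ L₁}

lemma lineWeight_eq_of_lineCount_eq (L₁ : Finset L) {g g' : Fin m → L}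
    (h : lineCount g = lineCount g') : lineWeight L₁ g = lineWeight L₁ g' := by
  obtain ⟨π, rfl⟩ := lineCount_eq_iff.mp h
  simp only [lineWeight, card_filter]
  exact Equiv.sum_comp π fun i => if g' i ∈ L₁ then 1 else 0

end Orbit

section FiberSum

variable {R : Type*} [CommRing R] {L : Type*} [Fintype L]

/-- The columns `z_{g 0,1}, z_{g 0,2}, z_{g 1,1}, …`, in this order. -/
def lineColumns (g : Fin m → L) : Fin (2 * m) → L × Bool :=
  Prod.map g id ∘ (pairEquiv m).symm

lemma card_smul_sum_mixedPf_lineWedge (Z : Matrix (Fin (2 * m)) (L × Bool) R) (g₀ : Fin m → L) :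
    #{π : Perm (Fin m) | g₀ ∘ π = g₀} •
        ∑ g with lineCount g = lineCount g₀, mixedPf (lineWedge Z ∘ g) =
      (Z.submatrix id (lineColumns g₀)).det := by
  rw [card_stabilizer_smul_sum_lineCount_eq]
  exact sum_mixedPf_lineWedge_comp_perm (Z.submatrix id (Prod.map g₀ id))

theorem sum_mixedPf_lineWedge_of_injective (Z : Matrix (Fin (2 * m)) (L × Bool) R)
    {g₀ : Fin m → L} (hg : Function.Injective g₀) :
    ∑ g with lineCount g = lineCount g₀, mixedPf (lineWedge Z ∘ g) =
      (Z.submatrix id (lineColumns g₀)).det := by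
  have stab : #{π : Perm (Fin m) | g₀ ∘ π = g₀} = 1 := by
    refine card_eq_one.mpr ⟨1, eq_singleton_iff_unique_mem.mpr ⟨by simp, fun π hπ => ?_⟩⟩
    exact Perm.ext fun i => hg (congrFun (mem_filter.mp hπ).2 i)
  rw [← card_smul_sum_mixedPf_lineWedge, stab, one_smul]

noncomputable def genericMatrix (m : ℕ) (L : Type*) :
    Matrix (Fin (2 * m)) (L × Bool) (MvPolynomial (Fin (2 * m) × L × Bool) ℤ) :=
  Matrix.of fun p x => MvPolynomial.X (p, x)

/-- Over `ℤ[X]` the stabilizer factor can be cancelled; the identity then specializes to any `R`. -/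
theorem sum_mixedPf_lineWedge_of_not_injective (Z : Matrix (Fin (2 * m)) (L × Bool) R)
    {g₀ : Fin m → L} (hg : ¬Function.Injective g₀) :
    ∑ g with lineCount g = lineCount g₀, mixedPf (lineWedge Z ∘ g) = 0 := by
  obtain ⟨i, j, hij, hne⟩ := Function.not_injective_iff.mp hg
  have generic : ∑ g with lineCount g = lineCount g₀,
      mixedPf (lineWedge (genericMatrix m L) ∘ g) = 0 := by
    have hdet := card_smul_sum_mixedPf_lineWedge (genericMatrix m L) g₀
    rw [Matrix.det_zero_of_column_eq (evenIdx_injective.ne hne) fun p => by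
      simp [lineColumns, hij]] at hdet
    exact (smul_eq_zero.mp hdet).resolve_left (card_ne_zero_of_mem (a := 1) (by simp))
  set φ := MvPolynomial.eval₂Hom (Int.castRingHom R) fun v : Fin (2 * m) × L × Bool => Z v.1 v.2
  have hZ : (genericMatrix m L).map φ = Z := by
    ext p x
    simp [genericMatrix, φ]
  simpa [← hZ, lineWedge_map, map_mixedPf, Function.comp_def] using congrArg φ generic

end FiberSum

section Coefficients

open Polynomial

variable {F : Type} [Field F] {L : Type}

lemma prod_lineCoeff (L₁ : Finset L) (g : Fin m → L) :
    ∏ i, (if g i ∈ L₁ then X * C (MvPolynomial.X (g i)) else C (MvPolynomial.X (g i)) :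
        (MvPolynomial L F)[X]) =
      X ^ lineWeight L₁ g * C (MvPolynomial.monomial (lineCount g) 1) := by
  have factor : ∀ i, (if g i ∈ L₁ then X * C (MvPolynomial.X (g i)) else
      C (MvPolynomial.X (g i)) : (MvPolynomial L F)[X]) =
      (if g i ∈ L₁ then X else 1) * C (MvPolynomial.X (g i)) := fun i => by split_ifs <;> simp
  simp only [factor, prod_mul_distrib, prod_ite, prod_const, one_pow, mul_one, ← map_prod,
    lineCount, MvPolynomial.monomial_sum_one, lineWeight]
  rfl

theorem coeff_pfaffian_weightedLovaszMatrix [Fintype L] (Z : Matrix (Fin (2 * m)) (L × Bool) F)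
    (L₁ : Finset L) (k : ℕ) :
    (pfaffian (weightedLovaszMatrix F Z L₁)).coeff k =
      ∑ g with lineWeight L₁ g = k,
        MvPolynomial.monomial (lineCount g) (mixedPf (lineWedge Z ∘ g)) := by
  have hY : weightedLovaszMatrix F Z L₁ = ∑ ℓ, (if ℓ ∈ L₁ then X * C (MvPolynomial.X ℓ)
      else C (MvPolynomial.X ℓ)) • lineWedge (Z.map (C.comp MvPolynomial.C)) ℓ := rfl
  rw [hY, pfaffian_sum_smul, finsetSum_coeff, sum_filter]
  refine sum_congr rfl fun g _ => ?_
  have hpf : mixedPf (lineWedge (Z.map (C.comp (MvPolynomial.C (σ := L)))) ∘ g) =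
      C (MvPolynomial.C (mixedPf (lineWedge Z ∘ g))) := by
    simp only [Function.comp_def, lineWedge_map, ← map_mixedPf, RingHom.comp_apply]
  rw [prod_lineCoeff, hpf, mul_assoc, ← map_mul, mul_comm, mul_comm (MvPolynomial.monomial _ _),
    MvPolynomial.C_mul_monomial, mul_one, coeff_C_mul_X_pow]
  exact if_congr eq_comm rfl rfl

lemma coeff_coeff_pfaffian_weightedLovaszMatrix [Fintype L]
    (Z : Matrix (Fin (2 * m)) (L × Bool) F) (L₁ : Finset L) (k : ℕ) (d : L →₀ ℕ) :
    ((pfaffian (weightedLovaszMatrix F Z L₁)).coeff k).coeff d =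
      ∑ g with lineWeight L₁ g = k ∧ lineCount g = d, mixedPf (lineWedge Z ∘ g) := by
  simp only [coeff_pfaffian_weightedLovaszMatrix, MvPolynomial.coeff_sum,
    MvPolynomial.coeff_monomial]
  rw [← sum_filter, filter_filter]

lemma coeff_coeff_pfaffian_weightedLovaszMatrix_lineCount [Fintype L]
    (Z : Matrix (Fin (2 * m)) (L × Bool) F) (L₁ : Finset L) (g₀ : Fin m → L) :
    ((pfaffian (weightedLovaszMatrix F Z L₁)).coeff (lineWeight L₁ g₀)).coeff (lineCount g₀) =
      ∑ g with lineCount g = lineCount g₀, mixedPf (lineWedge Z ∘ g) := by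
  rw [coeff_coeff_pfaffian_weightedLovaszMatrix]
  exact sum_congr (filter_congr fun g _ =>
    and_iff_right_of_imp (lineWeight_eq_of_lineCount_eq L₁)) fun _ _ => rfl

theorem coeff_pfaffian_weightedLovaszMatrix_ne_zero_iff [Fintype L]
    (Z : Matrix (Fin (2 * m)) (L × Bool) F) (L₁ : Finset L) (k : ℕ) :
    (pfaffian (weightedLovaszMatrix F Z L₁)).coeff k ≠ 0 ↔
      ∃ g : Fin m → L, Function.Injective g ∧ lineWeight L₁ g = k ∧
        (Z.submatrix id (lineColumns g)).det ≠ 0 := by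
  constructor
  · intro hk
    obtain ⟨d, hd⟩ := MvPolynomial.ne_zero_iff.mp hk
    obtain ⟨g, hg, -⟩ :=
      exists_ne_zero_of_sum_ne_zero (coeff_coeff_pfaffian_weightedLovaszMatrix Z L₁ k d ▸ hd)
    obtain ⟨rfl, rfl⟩ := (mem_filter.mp hg).2
    rw [coeff_coeff_pfaffian_weightedLovaszMatrix_lineCount] at hd
    by_cases hinj : Function.Injective g
    · exact ⟨g, hinj, rfl, sum_mixedPf_lineWedge_of_injective Z hinj ▸ hd⟩
    · exact absurd (sum_mixedPf_lineWedge_of_not_injective Z hinj) hd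
  · rintro ⟨g, hinj, rfl, hdet⟩
    refine MvPolynomial.ne_zero_iff.mpr ⟨lineCount g, ?_⟩
    rwa [coeff_coeff_pfaffian_weightedLovaszMatrix_lineCount,
      sum_mixedPf_lineWedge_of_injective Z hinj]

end Coefficients

section ParityBases

variable {L : Type*}

lemma card_filter_fst_product (S : Finset L) (ℓ : L) :
    #((S ×ˢ (univ : Finset Bool)).filter fun p => p.1 = ℓ) = if ℓ ∈ S then 2 else 0 := by
  split_ifs with h
  · rw [show (S ×ˢ univ).filter (fun p : L × Bool => p.1 = ℓ) = {ℓ} ×ˢ univ by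
      ext ⟨a, b⟩; by_cases a = ℓ <;> simp_all]
    simp
  · exact card_eq_zero.mpr (filter_eq_empty_iff.mpr fun p hp hpℓ => h (hpℓ ▸ (mem_product.mp hp).1))

def IsParitySet (W : Finset (L × Bool)) : Prop :=
  ∀ ℓ, #(W.filter fun p => p.1 = ℓ) = 0 ∨ #(W.filter fun p => p.1 = ℓ) = 2

noncomputable def parityWeight [Fintype L] (L₁ : Finset L) (W : Finset (L × Bool)) : ℕ :=
  #{ℓ | #(W.filter fun p => p.1 = ℓ) = 2 ∧ ℓ ∈ L₁}

lemma isParitySet_iff_exists_eq_product [Fintype L] {W : Finset (L × Bool)} :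
    IsParitySet W ↔ ∃ S : Finset L, W = S ×ˢ univ := by
  refine ⟨fun hW => ⟨univ.filter fun ℓ => #(W.filter fun p => p.1 = ℓ) = 2, ?_⟩, ?_⟩
  · ext ⟨ℓ, b⟩
    have sub : W.filter (fun p => p.1 = ℓ) ⊆ {ℓ} ×ˢ univ := fun p hp =>
      mem_product.mpr ⟨mem_singleton.mpr (mem_filter.mp hp).2, mem_univ _⟩
    simp only [mem_product, mem_filter, mem_univ, true_and, and_true]
    refine ⟨fun hp => (hW ℓ).resolve_left (card_ne_zero_of_mem (mem_filter.mpr ⟨hp, rfl⟩)),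
      fun h2 => ?_⟩
    have full := eq_of_subset_of_card_le sub (by simp [h2])
    exact (mem_filter.mp (full ▸ (by simp : (ℓ, b) ∈ ({ℓ} ×ˢ univ : Finset (L × Bool))))).1
  · rintro ⟨S, rfl⟩ ℓ
    rw [card_filter_fst_product]
    split_ifs <;> simp

lemma parityWeight_product [Fintype L] (L₁ S : Finset L) :
    parityWeight L₁ (S ×ˢ univ) = #(S.filter (· ∈ L₁)) := by
  refine congrArg card (ext fun ℓ => ?_)
  simp only [mem_filter, mem_univ, true_and, card_filter_fst_product]
  split_ifs <;> simp [*]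

lemma exists_card_eq_and_iff_exists_injective {P : Finset L → Prop} :
    (∃ S : Finset L, #S = m ∧ P S) ↔
      ∃ g : Fin m → L, Function.Injective g ∧ P (univ.image g) := by
  refine ⟨fun ⟨S, hS, hP⟩ => ?_, fun ⟨g, hg, hP⟩ => ⟨_, by simp [card_image_of_injective _ hg], hP⟩⟩
  set e := S.equivFinOfCardEq hS
  refine ⟨fun i => e.symm i, Subtype.val_injective.comp e.symm.injective, ?_⟩
  convert hP
  ext ℓ
  exact ⟨fun h => by obtain ⟨i, -, rfl⟩ := mem_image.mp h; exact (e.symm i).2,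
    fun h => mem_image.mpr ⟨e ⟨ℓ, h⟩, mem_univ _, by simp⟩⟩

lemma linearIndependent_image_product_iff {R M : Type*} [Semiring R] [AddCommMonoid M]
    [Module R M] (v : L × Bool → M) {g : Fin m → L} (hg : Function.Injective g) :
    LinearIndependent R (fun p : (univ.image g ×ˢ (univ : Finset Bool) : Finset _) => v p) ↔
      LinearIndependent R (v ∘ lineColumns g) := by
  have hinj : Function.Injective (lineColumns g) :=
    (hg.prodMap Function.injective_id).comp (pairEquiv m).symm.injective
  have hrange : Set.range (lineColumns g) = ↑(univ.image g ×ˢ (univ : Finset Bool)) := by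
    ext ⟨ℓ, b⟩
    simp [lineColumns]
  rw [← linearIndepOn_range_iff hinj, hrange]
  rfl

theorem exists_parityBase_iff [Fintype L] {F : Type*} [Field F]
    (Z : Matrix (Fin (2 * m)) (L × Bool) F) (L₁ : Finset L) (k : ℕ) :
    (∃ W : Finset (L × Bool), IsParitySet W ∧ #W = 2 * m ∧
        LinearIndependent F (fun p : W => fun i => Z i (p : L × Bool)) ∧
        parityWeight L₁ W = k) ↔
      ∃ g : Fin m → L, Function.Injective g ∧ lineWeight L₁ g = k ∧
        (Z.submatrix id (lineColumns g)).det ≠ 0 := by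
  calc _ ↔ ∃ S : Finset L, #S = m ∧
        (LinearIndependent F (fun p : (S ×ˢ (univ : Finset Bool) : Finset _) => fun i => Z i p) ∧
          #(S.filter (· ∈ L₁)) = k) := by
        constructor
        · rintro ⟨W, hW, hcard, hli, hk⟩
          obtain ⟨S, rfl⟩ := isParitySet_iff_exists_eq_product.mp hW
          rw [parityWeight_product] at hk
          exact ⟨S, by simpa [card_product, mul_comm] using hcard, hli, hk⟩
        · rintro ⟨S, hS, hli, hk⟩
          exact ⟨S ×ˢ univ, isParitySet_iff_exists_eq_product.mpr ⟨S, rfl⟩,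
            by simp [card_product, hS, mul_comm], hli, by rwa [parityWeight_product]⟩
    _ ↔ _ := exists_card_eq_and_iff_exists_injective
    _ ↔ _ := exists_congr fun g => and_congr_right fun hg => by
        rw [linearIndependent_image_product_iff (fun p i => Z i p) hg, filter_image,
          card_image_of_injective _ hg, and_comm]
        refine and_congr Iff.rfl ?_
        rw [← isUnit_iff_ne_zero, ← Matrix.isUnit_iff_isUnit_det,
          ← Matrix.linearIndependent_cols_iff_isUnit]
        rfl

end ParityBases

end LovaszPfaffian

theorem weighted_lovasz_parity_base_iff_coeff_pfaffian_ne_zero_general (F : Type) [Field F]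
    (m : ℕ) (L : Type) [Fintype L]
    (Z : Matrix (Fin (2 * m)) (L × Bool) F) (L₁ : Finset L) (k : ℕ) :
    (∃ W : Finset (L × Bool),
        (∀ ℓ : L, (W.filter fun p => p.1 = ℓ).card = 0 ∨
          (W.filter fun p => p.1 = ℓ).card = 2) ∧
        W.card = 2 * m ∧
        LinearIndependent F (fun p : W => fun i => Z i (p : L × Bool)) ∧
        (Finset.univ.filter fun ℓ : L =>
          (W.filter fun p => p.1 = ℓ).card = 2 ∧ ℓ ∈ L₁).card = k) ↔
      (pfaffian (weightedLovaszMatrix F Z L₁)).coeff k ≠ 0 :=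
  (LovaszPfaffian.exists_parityBase_iff Z L₁ k).trans
    (LovaszPfaffian.coeff_pfaffian_weightedLovaszMatrix_ne_zero_iff Z L₁ k).symm

/-- Camerini–Galbiati–Maffioli: for each `k = 0, 1, …, n/2` (`n = 2m`), a 0/1-weighted
LMP instance `(Z, L₀, L₁)` has a parity base of weight exactly `k` (a parity set
`W ⊆ U = L × Bool` of size `n` with linearly independent columns such that exactly `k` of
its lines lie in `L₁`) if and only if the coefficient of `y^k` in `pf Y(Z, L₀, L₁)` is
not the zero polynomial in `F[X_L]`. -/
theorem weighted_lovasz_parity_base_iff_coeff_pfaffian_ne_zero (F : Type) [Field F]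
    (m : ℕ) (hm : 0 < m) (L : Type) [Fintype L]
    (Z : Matrix (Fin (2 * m)) (L × Bool) F) (L₁ : Finset L) (k : ℕ) (hk : k ≤ m) :
    (∃ W : Finset (L × Bool),
        (∀ ℓ : L, (W.filter fun p => p.1 = ℓ).card = 0 ∨
          (W.filter fun p => p.1 = ℓ).card = 2) ∧
        W.card = 2 * m ∧
        LinearIndependent F (fun p : W => fun i => Z i (p : L × Bool)) ∧
        (Finset.univ.filter fun ℓ : L =>
          (W.filter fun p => p.1 = ℓ).card = 2 ∧ ℓ ∈ L₁).card = k) ↔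
      (pfaffian (weightedLovaszMatrix F Z L₁)).coeff k ≠ 0 :=
  weighted_lovasz_parity_base_iff_coeff_pfaffian_ne_zero_general F m L Z L₁ k
end
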